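/- arXiv:1707.03703 — 4 statements merged into one kernel-verified Lean document; each statement's English description precedes it below -/
import Mathlib

section
/- The derivation ∂ is injective on each component Θ^p_d with p ≥ 1: if a ∈ Θ^p_d satisfies ∂a = 0, then a = 0. -/
/-- The generators `θ^i` of the exterior algebra over `ℝ` on countably many generators. -/
noncomputable def θg (i : ℕ) : ExteriorAlgebra ℝ (ℕ →₀ ℝ) :=
  ExteriorAlgebra.ι ℝ (Finsupp.single i 1)

/-- The monomial `θ^{i₁} ⋯ θ^{i_p}` associated to a list of indices. -/
noncomputable def mon (l : List ℕ) : ExteriorAlgebra ℝ (ℕ →₀ ℝ) :=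
  (l.map θg).prod

/-- `Θ^p_d`: the span of the standard monomials with `p` factors and total weight `d`. -/
noncomputable def ThSpace (p d : ℕ) : Submodule ℝ (ExteriorAlgebra ℝ (ℕ →₀ ℝ)) :=
  Submodule.span ℝ
    {x | ∃ l : List ℕ, l.length = p ∧ l.Pairwise (· > ·) ∧ l.sum = d ∧ x = mon l}

noncomputable abbrev EA := ExteriorAlgebra ℝ (ℕ →₀ ℝ)
noncomputable instance (priority := 2000) : Module EA EA := Semiring.toModule
noncomputable instance (priority := 2000) : Module EAᵐᵒᵖ EA := Semiring.toOppositeModule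
noncomputable instance (priority := 2000) : Semiring (TrivSqZeroExt EA EA) := TrivSqZeroExt.semiring
set_option synthInstance.maxHeartbeats 400000 in
noncomputable instance (priority := 2000) : Algebra ℝ (TrivSqZeroExt EA EA) := TrivSqZeroExt.algebra' _ _ _

noncomputable def flow : (ℕ →₀ ℝ) →ₗ[ℝ] (ℕ →₀ ℝ) :=
  Finsupp.lsum ℝ (fun i => (i : ℝ) • Finsupp.lsingle (i - 1))

lemma flow_single (i : ℕ) : flow (Finsupp.single i 1) = (i : ℝ) • Finsupp.single (i - 1) 1 := by
  simp [flow]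

noncomputable def gmap : (ℕ →₀ ℝ) →ₗ[ℝ] TrivSqZeroExt EA EA where
  toFun v := TrivSqZeroExt.inl (ExteriorAlgebra.ι ℝ v)
    + TrivSqZeroExt.inr (ExteriorAlgebra.ι ℝ (flow v))
  map_add' x y := by
    apply TrivSqZeroExt.ext <;>
      simp [TrivSqZeroExt.fst_add, TrivSqZeroExt.snd_add]
  map_smul' r x := by
    apply TrivSqZeroExt.ext <;>
      simp [TrivSqZeroExt.fst_add, TrivSqZeroExt.snd_add]

lemma gmap_sq (v : ℕ →₀ ℝ) : gmap v * gmap v = 0 := by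
  apply TrivSqZeroExt.ext
  · simp [gmap, TrivSqZeroExt.fst_mul, ExteriorAlgebra.ι_sq_zero]
  · simp only [gmap, LinearMap.coe_mk, AddHom.coe_mk, TrivSqZeroExt.snd_mul,
      TrivSqZeroExt.fst_add, TrivSqZeroExt.snd_add, TrivSqZeroExt.fst_inl,
      TrivSqZeroExt.snd_inl, TrivSqZeroExt.fst_inr, TrivSqZeroExt.snd_inr,
      TrivSqZeroExt.snd_zero, zero_add, add_zero, smul_eq_mul,
      MulOpposite.smul_eq_mul_unop, MulOpposite.unop_op]
    exact ExteriorAlgebra.ι_add_mul_swap _ _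

noncomputable def phi : EA →ₐ[ℝ] TrivSqZeroExt EA EA :=
  ExteriorAlgebra.lift ℝ ⟨gmap, gmap_sq⟩

lemma fst_phi (x : EA) : (phi x).fst = x := by
  have h : (TrivSqZeroExt.fstHom ℝ EA EA).comp phi = AlgHom.id ℝ EA := by
    apply ExteriorAlgebra.hom_ext
    apply LinearMap.ext
    intro v
    simp [phi, gmap]
  exact congrArg (fun f => f x) (congrArg DFunLike.coe h)

noncomputable def Dp : Module.End ℝ EA where
  toFun x := (phi x).snd
  map_add' x y := by simp only [map_add, TrivSqZeroExt.snd_add]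
  map_smul' r x := by simp only [map_smul, TrivSqZeroExt.snd_smul, RingHom.id_apply]

lemma Dp_apply (x : EA) : Dp x = (phi x).snd := rfl

lemma Dp_mul (x y : EA) : Dp (x * y) = Dp x * y + x * Dp y := by
  rw [Dp_apply, map_mul, TrivSqZeroExt.snd_mul, fst_phi, fst_phi,
    smul_eq_mul, MulOpposite.smul_eq_mul_unop, MulOpposite.unop_op, Dp_apply, Dp_apply]
  exact add_comm _ _

lemma Dp_theta (i : ℕ) : Dp (θg i) = (i : ℝ) • θg (i - 1) := by
  rw [Dp_apply, θg, phi, ExteriorAlgebra.lift_ι_apply]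
  simp only [gmap, LinearMap.coe_mk, AddHom.coe_mk]
  rw [TrivSqZeroExt.snd_add, TrivSqZeroExt.snd_inl, TrivSqZeroExt.snd_inr, zero_add,
    flow_single, map_smul, θg]

lemma mon_nil : mon [] = 1 := rfl
lemma mon_cons (i : ℕ) (l : List ℕ) : mon (i :: l) = θg i * mon l := by
  simp [mon]

noncomputable def Tlen (p : ℕ) : Submodule ℝ EA :=
  Submodule.span ℝ {x | ∃ l : List ℕ, l.length = p ∧ x = mon l}

noncomputable def Ssp (p s : ℕ) : Submodule ℝ EA :=
  Submodule.span ℝ {x | ∃ l : List ℕ, l.length = p ∧ l.sum = s ∧ x = mon l}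

lemma der_one (D : Module.End ℝ EA) (hder : ∀ a b, D (a * b) = D a * b + a * D b) :
    D 1 = 0 := by
  have h := hder 1 1
  simp only [mul_one, one_mul] at h
  exact (left_eq_add.mp h)

lemma theta_mul_T {p : ℕ} {x : EA} (hx : x ∈ Tlen p) (i : ℕ) : θg i * x ∈ Tlen (p + 1) := by
  induction hx using Submodule.span_induction with
  | mem x h =>
    obtain ⟨l, hl, rfl⟩ := h
    rw [← mon_cons]
    exact Submodule.subset_span ⟨i :: l, by simp [hl], rfl⟩
  | zero => rw [mul_zero]; exact zero_mem _
  | add x y hx hy ihx ihy => rw [mul_add]; exact add_mem ihx ihy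
  | smul a x hx ih => rw [mul_smul_comm]; exact Submodule.smul_mem _ _ ih

lemma theta_mul_S {p s : ℕ} {x : EA} (hx : x ∈ Ssp p s) (i : ℕ) :
    θg i * x ∈ Ssp (p + 1) (i + s) := by
  induction hx using Submodule.span_induction with
  | mem x h =>
    obtain ⟨l, hl, hs, rfl⟩ := h
    rw [← mon_cons]
    exact Submodule.subset_span ⟨i :: l, by simp [hl], by simp [hs], rfl⟩
  | zero => rw [mul_zero]; exact zero_mem _
  | add x y hx hy ihx ihy => rw [mul_add]; exact add_mem ihx ihy
  | smul a x hx ih => rw [mul_smul_comm]; exact Submodule.smul_mem _ _ ih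

lemma Dp_mon_sum_zero : ∀ l : List ℕ, l.sum = 0 → Dp (mon l) = 0 := by
  intro l
  induction l with
  | nil => intro _; rw [mon_nil]; exact der_one Dp Dp_mul
  | cons i l ih =>
    intro hs
    simp only [List.sum_cons, Nat.add_eq_zero] at hs
    obtain ⟨rfl, hs⟩ := hs
    rw [mon_cons, Dp_mul, Dp_theta, ih hs, mul_zero, add_zero]
    simp

lemma Dp_mon_mem_S : ∀ (l : List ℕ) (s : ℕ), l.sum = s + 1 → Dp (mon l) ∈ Ssp l.length s := by
  intro l
  induction l with
  | nil => intro s hs; simp at hs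
  | cons i l ih =>
    intro s hs
    simp only [List.sum_cons] at hs
    rw [mon_cons, Dp_mul, Dp_theta, smul_mul_assoc]
    apply add_mem
    · cases i with
      | zero => simp only [Nat.cast_zero, zero_smul]; exact zero_mem _
      | succ j =>
        apply Submodule.smul_mem
        rw [Nat.add_sub_cancel, ← mon_cons]
        exact Submodule.subset_span ⟨j :: l, by simp, by simp; omega, rfl⟩
    · cases hls : l.sum with
      | zero => rw [Dp_mon_sum_zero l hls, mul_zero]; exact zero_mem _
      | succ t =>
        have h2 := theta_mul_S (ih t hls) i
        have hit : i + t = s := by omega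
        simpa [hit] using h2

lemma Dp_mon_mem_T : ∀ l : List ℕ, Dp (mon l) ∈ Tlen l.length := by
  intro l
  induction l with
  | nil => rw [mon_nil, der_one Dp Dp_mul]; exact zero_mem _
  | cons i l ih =>
    rw [mon_cons, Dp_mul, Dp_theta, smul_mul_assoc]
    apply add_mem
    · apply Submodule.smul_mem
      rw [← mon_cons]
      exact Submodule.subset_span ⟨(i - 1) :: l, by simp, rfl⟩
    · simpa using theta_mul_T ih i

lemma Dp_S {p s : ℕ} {a : EA} (ha : a ∈ Ssp p (s + 1)) : Dp a ∈ Ssp p s := by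
  induction ha using Submodule.span_induction with
  | mem x h =>
    obtain ⟨l, hl, hs, rfl⟩ := h
    have := Dp_mon_mem_S l s hs
    rwa [hl] at this
  | zero => rw [map_zero]; exact zero_mem _
  | add x y hx hy ihx ihy => rw [map_add]; exact add_mem ihx ihy
  | smul a x hx ih => rw [map_smul]; exact Submodule.smul_mem _ _ ih

lemma Dp_S0 {p : ℕ} {a : EA} (ha : a ∈ Ssp p 0) : Dp a = 0 := by
  induction ha using Submodule.span_induction with
  | mem x h =>
    obtain ⟨l, hl, hs, rfl⟩ := h
    exact Dp_mon_sum_zero l hs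
  | zero => rw [map_zero]
  | add x y hx hy ihx ihy => rw [map_add, ihx, ihy, add_zero]
  | smul a x hx ih => rw [map_smul, ih, smul_zero]

lemma Dp_T {p : ℕ} {a : EA} (ha : a ∈ Tlen p) : Dp a ∈ Tlen p := by
  induction ha using Submodule.span_induction with
  | mem x h =>
    obtain ⟨l, hl, rfl⟩ := h
    have := Dp_mon_mem_T l
    rwa [hl] at this
  | zero => rw [map_zero]; exact zero_mem _
  | add x y hx hy ihx ihy => rw [map_add]; exact add_mem ihx ihy
  | smul a x hx ih => rw [map_smul]; exact Submodule.smul_mem _ _ ih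

lemma iter_T {p : ℕ} {a : EA} (ha : a ∈ Tlen p) (k : ℕ) : (⇑Dp)^[k] a ∈ Tlen p := by
  induction k with
  | zero => simpa using ha
  | succ k ih => rw [Function.iterate_succ_apply']; exact Dp_T ih

lemma nilp (p : ℕ) : ∀ s : ℕ, ∀ a ∈ Ssp p s, (⇑Dp)^[s + 1] a = 0 := by
  intro s
  induction s with
  | zero => intro a ha; simpa using Dp_S0 ha
  | succ t ih =>
    intro a ha
    rw [Function.iterate_succ_apply]
    exact ih _ (Dp_S ha)

lemma comm_mon (D : Module.End ℝ EA) (hder : ∀ a b, D (a * b) = D a * b + a * D b)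
    (hθ : ∀ i, D (θg i) = θg (i + 1)) :
    ∀ l : List ℕ, Dp (D (mon l)) - D (Dp (mon l)) = (l.length : ℝ) • mon l := by
  intro l
  induction l with
  | nil =>
    rw [mon_nil, der_one D hder, der_one Dp Dp_mul, map_zero, map_zero]
    simp
  | cons i l ih =>
    set m := mon l with hm
    have hθ' : (i : ℝ) • θg (i - 1 + 1) = (i : ℝ) • θg i := by
      cases i <;> simp
    have e1 : Dp (D (θg i * m)) = ((i : ℝ) + 1) • (θg i * m) + θg (i + 1) * Dp m
        + (i : ℝ) • (θg (i - 1) * D m) + θg i * Dp (D m) := by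
      rw [hder, hθ, map_add, Dp_mul, Dp_mul, Dp_theta, Dp_theta]
      simp only [Nat.add_sub_cancel, smul_mul_assoc]
      push_cast
      module
    have e2 : D (Dp (θg i * m)) = (i : ℝ) • (θg i * m) + (i : ℝ) • (θg (i - 1) * D m)
        + θg (i + 1) * Dp m + θg i * D (Dp m) := by
      rw [Dp_mul, Dp_theta, smul_mul_assoc, map_add, map_smul, hder, hder, hθ, hθ,
        smul_add, ← smul_mul_assoc, hθ', smul_mul_assoc]
      module
    have ih' : Dp (D m) = D (Dp m) + (l.length : ℝ) • m := by
      rw [← ih]; abel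
    rw [mon_cons, ← hm, e1, e2, ih', List.length_cons]
    push_cast
    rw [mul_add, mul_smul_comm]
    module

lemma comm_span (D : Module.End ℝ EA) (hder : ∀ a b, D (a * b) = D a * b + a * D b)
    (hθ : ∀ i, D (θg i) = θg (i + 1)) (p : ℕ) :
    ∀ a ∈ Tlen p, Dp (D a) - D (Dp a) = (p : ℝ) • a := by
  intro a ha
  induction ha using Submodule.span_induction with
  | mem x h =>
    obtain ⟨l, hl, rfl⟩ := h
    rw [← hl]
    exact comm_mon D hder hθ l
  | zero => simp
  | add x y hx hy ihx ihy =>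
    rw [map_add, map_add, map_add, map_add, smul_add, ← ihx, ← ihy]; abel
  | smul a x hx ih =>
    rw [map_smul, map_smul, map_smul, map_smul, ← smul_sub, ih, smul_comm]

lemma descent (D : Module.End ℝ EA) (hder : ∀ a b, D (a * b) = D a * b + a * D b)
    (hθ : ∀ i, D (θg i) = θg (i + 1)) (p : ℕ) (a : EA) (haT : a ∈ Tlen p)
    (h : D a = 0) :
    ∀ k : ℕ, D ((⇑Dp)^[k + 1] a) = (-(((k + 1) * p : ℕ) : ℝ)) • (⇑Dp)^[k] a := by
  intro k
  induction k with
  | zero =>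
    rw [Function.iterate_one, Function.iterate_zero_apply]
    have hc := comm_span D hder hθ p a haT
    rw [h, map_zero, zero_sub] at hc
    have : D (Dp a) = -((p : ℝ) • a) := by rw [← hc]; abel
    rw [this]
    push_cast
    module
  | succ k ih =>
    rw [Function.iterate_succ_apply']
    have hT : (⇑Dp)^[k + 1] a ∈ Tlen p := iter_T haT (k + 1)
    have hc := comm_span D hder hθ p _ hT
    have h1 : D (Dp ((⇑Dp)^[k + 1] a)) =
        Dp (D ((⇑Dp)^[k + 1] a)) - (p : ℝ) • (⇑Dp)^[k + 1] a := by rw [← hc]; abel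
    rw [h1, ih, map_smul, Function.iterate_succ_apply']
    push_cast
    module

lemma kill (D : Module.End ℝ EA) (hder : ∀ a b, D (a * b) = D a * b + a * D b)
    (hθ : ∀ i, D (θg i) = θg (i + 1)) (p : ℕ) (hp : 1 ≤ p) (a : EA) (haT : a ∈ Tlen p)
    (h : D a = 0) :
    ∀ k : ℕ, (⇑Dp)^[k] a = 0 → a = 0 := by
  intro k
  induction k with
  | zero => exact fun h0 => h0
  | succ k ih =>
    intro h0
    apply ih
    have hd := descent D hder hθ p a haT h k
    rw [h0, map_zero] at hd
    have hc : (-(((k + 1) * p : ℕ) : ℝ)) ≠ 0 := by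
      simp only [ne_eq, neg_eq_zero, Nat.cast_eq_zero]
      positivity
    exact ((smul_eq_zero.mp hd.symm).resolve_left hc)

/-- the derivation `∂` (with `∂θ^i = θ^{i+1}`) is injective on each
component `Θ^p_d` with `p ≥ 1`. -/
theorem stmt0 (D : Module.End ℝ (ExteriorAlgebra ℝ (ℕ →₀ ℝ)))
    (hder : ∀ a b, D (a * b) = D a * b + a * D b)
    (hθ : ∀ i, D (θg i) = θg (i + 1))
    (p d : ℕ) (hp : 1 ≤ p)
    (a : ExteriorAlgebra ℝ (ℕ →₀ ℝ)) (ha : a ∈ ThSpace p d)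
    (h : D a = 0) : a = 0 := by
  have haS : a ∈ Ssp p d := by
    refine Submodule.span_mono ?_ ha
    rintro x ⟨l, hl, _, hs, rfl⟩
    exact ⟨l, hl, hs, rfl⟩
  have haT : a ∈ Tlen p := by
    refine Submodule.span_mono ?_ haS
    rintro x ⟨l, hl, _, rfl⟩
    exact ⟨l, hl, rfl⟩
  exact kill D hder hθ p hp a haT h (d + 1) (nilp p d a haS)
end

section
/- For d ≥ 1, the quotient space Θ^2_d / ∂(Θ^2_{d−1}) is one-dimensional if d is odd (spanned by the class of θ^{(d+1)/2} θ^{(d−1)/2}) and zero if d is even. -/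
lemma mon2 (a b : ℕ) : mon [a, b] = θg a * θg b := by simp [mon]

lemma mem2 {a b d : ℕ} (hab : b < a) (hsum : a + b = d) :
    θg a * θg b ∈ ThSpace 2 d := by
  rw [← mon2]
  exact Submodule.subset_span ⟨[a, b], by simp, by simp [hab], by simpa using hsum, rfl⟩

lemma list_len2 {l : List ℕ} (h : l.length = 2) : ∃ u v, l = [u, v] := by
  rcases l with _ | ⟨u, _ | ⟨v, _ | ⟨w, t⟩⟩⟩ <;> simp_all

lemma Dmul (D : Module.End ℝ (ExteriorAlgebra ℝ (ℕ →₀ ℝ)))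
    (hder : ∀ a b, D (a * b) = D a * b + a * D b)
    (hθ : ∀ i, D (θg i) = θg (i + 1)) (a b : ℕ) :
    D (θg a * θg b) = θg (a + 1) * θg b + θg a * θg (b + 1) := by
  rw [hder, hθ, hθ]

/-- The antisymmetric bilinear form used to detect the nontrivial class. -/
noncomputable def Bform (d : ℕ) : (ℕ →₀ ℝ) →ₗ[ℝ] (ℕ →₀ ℝ) →ₗ[ℝ] ℝ :=
  LinearMap.mk₂ ℝ (fun x y => ∑ b ∈ Finset.range (d + 1), (-1 : ℝ) ^ b * x (d - b) * y b)
    (by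
      intro m₁ m₂ n
      rw [← Finset.sum_add_distrib]
      refine Finset.sum_congr rfl fun b _ => ?_
      simp [Finsupp.add_apply]; ring)
    (by
      intro c m n
      rw [Finset.smul_sum]
      refine Finset.sum_congr rfl fun b _ => ?_
      simp [Finsupp.smul_apply, smul_eq_mul]; ring)
    (by
      intro m n₁ n₂
      rw [← Finset.sum_add_distrib]
      refine Finset.sum_congr rfl fun b _ => ?_
      simp [Finsupp.add_apply]; ring)
    (by
      intro c m n
      rw [Finset.smul_sum]
      refine Finset.sum_congr rfl fun b _ => ?_
      simp [Finsupp.smul_apply, smul_eq_mul]; ring)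

lemma Bform_apply (d : ℕ) (x y : ℕ →₀ ℝ) :
    Bform d x y = ∑ b ∈ Finset.range (d + 1), (-1 : ℝ) ^ b * x (d - b) * y b := rfl

lemma Bform_self {d : ℕ} (hdo : Odd d) (x : ℕ →₀ ℝ) : Bform d x x = 0 := by
  have key : Bform d x x = - Bform d x x := by
    conv_lhs => rw [Bform_apply,
      ← Finset.sum_range_reflect (fun b => (-1 : ℝ) ^ b * x (d - b) * x b) (d + 1)]
    rw [Bform_apply, ← Finset.sum_neg_distrib]
    refine Finset.sum_congr rfl fun j hj => ?_
    have hjd : j ≤ d := by simpa [Nat.lt_succ_iff] using hj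
    have h1 : d + 1 - 1 - j = d - j := by omega
    have h2 : d - (d - j) = j := by omega
    have h3 : (-1 : ℝ) ^ (d - j) = -(-1 : ℝ) ^ j := by
      have hadd : (-1 : ℝ) ^ j * (-1 : ℝ) ^ (d - j) = (-1 : ℝ) ^ d := by
        rw [← pow_add]; congr 1; omega
      have hd : (-1 : ℝ) ^ d = -1 := Odd.neg_one_pow hdo
      have hsq : (-1 : ℝ) ^ j * (-1 : ℝ) ^ j = 1 := by
        rw [← pow_add]; exact Even.neg_one_pow ⟨j, rfl⟩
      have := congrArg (fun t => (-1 : ℝ) ^ j * t) hadd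
      rw [← mul_assoc, hsq, one_mul] at this
      rw [this, hd]; ring
    rw [h1, h2, h3]; ring
  linarith

lemma Bform_single {d u v : ℕ} (hsum : u + v = d) :
    Bform d (Finsupp.single u 1) (Finsupp.single v 1) = (-1 : ℝ) ^ v := by
  have hv : v ∈ Finset.range (d + 1) := by simp; omega
  rw [Bform_apply, Finset.sum_eq_single_of_mem v hv]
  · have h1 : d - v = u := by omega
    rw [h1, Finsupp.single_eq_same, Finsupp.single_eq_same]; ring
  · intro b _ hb
    rw [Finsupp.single_eq_of_ne' (fun h => hb (h.symm))]
    ring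

/-- The degree-2 alternating form induced by `Bform d`, for odd `d`. -/
noncomputable def Aalt (d : ℕ) (hdo : Odd d) : (ℕ →₀ ℝ) [⋀^Fin 2]→ₗ[ℝ] ℝ where
  toFun v := Bform d (v 0) (v 1)
  map_update_add' := by
    intro _ m i x y
    fin_cases i <;> simp [Function.update, Fin.ext_iff]
  map_update_smul' := by
    intro _ m i c x
    fin_cases i <;> simp [Function.update, Fin.ext_iff]
  map_eq_zero_of_eq' := by
    intro v i j hveq hne
    have h01 : v 0 = v 1 := by fin_cases i <;> fin_cases j <;> simp_all
    show Bform d (v 0) (v 1) = 0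
    rw [h01]; exact Bform_self hdo _

/-- Family of alternating forms, supported in degree 2. -/
noncomputable def fam (d : ℕ) (hdo : Odd d) : ∀ i : ℕ, (ℕ →₀ ℝ) [⋀^Fin i]→ₗ[ℝ] ℝ :=
  fun i => match i with
  | 2 => Aalt d hdo
  | _ => 0

lemma phi_mul (d : ℕ) (hdo : Odd d) (x y : ℕ →₀ ℝ) :
    ExteriorAlgebra.liftAlternating (fam d hdo)
      (ExteriorAlgebra.ι ℝ x * ExteriorAlgebra.ι ℝ y) = Bform d x y := by
  rw [ExteriorAlgebra.liftAlternating_ι_mul, ExteriorAlgebra.liftAlternating_ι]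
  rfl

lemma phi_mon (d : ℕ) (hdo : Odd d) {u v : ℕ} (hsum : u + v = d) :
    ExteriorAlgebra.liftAlternating (fam d hdo) (θg u * θg v) = (-1 : ℝ) ^ v := by
  rw [θg, θg, phi_mul, Bform_single hsum]

lemma redA (D : Module.End ℝ (ExteriorAlgebra ℝ (ℕ →₀ ℝ)))
    (hder : ∀ a b, D (a * b) = D a * b + a * D b)
    (hθ : ∀ i, D (θg i) = θg (i + 1)) {d : ℕ} :
    ∀ b a, b < a → a + b = d → ∃ c ∈ ThSpace 2 (d - 1),
      θg a * θg b = (-1 : ℝ) ^ b • (θg d * θg 0) + D c := by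
  intro b
  induction b with
  | zero =>
    intro a _ hsum
    have : a = d := by omega
    subst this
    exact ⟨0, zero_mem _, by simp⟩
  | succ b ih =>
    intro a h hsum
    obtain ⟨c, hc, hcEq⟩ := ih (a + 1) (by omega) (by omega)
    refine ⟨θg a * θg b - c, sub_mem (mem2 (by omega) (by omega)) hc, ?_⟩
    rw [map_sub, Dmul D hder hθ, hcEq, pow_succ]
    module

lemma redB (D : Module.End ℝ (ExteriorAlgebra ℝ (ℕ →₀ ℝ)))
    (hder : ∀ a b, D (a * b) = D a * b + a * D b)
    (hθ : ∀ i, D (θg i) = θg (i + 1)) {d : ℕ} (hd2 : 2 ≤ d) (hde : Even d) :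
    ∃ c ∈ ThSpace 2 (d - 1), θg d * θg 0 = D c := by
  obtain ⟨k, hk⟩ := hde
  have hk1 : 1 ≤ k := by omega
  have claim : ∀ m, m + 1 ≤ k → ∃ c ∈ ThSpace 2 (d - 1),
      θg d * θg 0 = D c + (-1 : ℝ) ^ (m + 1) • (θg (d - 1 - m) * θg (m + 1)) := by
    intro m
    induction m with
    | zero =>
      intro _
      refine ⟨θg (d - 1) * θg 0, mem2 (by omega) (by omega), ?_⟩
      have hD := Dmul D hder hθ (d - 1) 0
      have e1 : d - 1 + 1 = d := by omega
      rw [e1] at hD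
      rw [hD]
      simp only [Nat.sub_zero, pow_one]
      module
    | succ m ih =>
      intro hm
      obtain ⟨c, hc, hcEq⟩ := ih (by omega)
      have hD := Dmul D hder hθ (d - 2 - m) (m + 1)
      have e1 : d - 2 - m + 1 = d - 1 - m := by omega
      rw [e1] at hD
      refine ⟨c + (-1 : ℝ) ^ (m + 1) • (θg (d - 2 - m) * θg (m + 1)),
        add_mem hc (Submodule.smul_mem _ _ (mem2 (by omega) (by omega))), ?_⟩
      have e2 : d - 1 - (m + 1) = d - 2 - m := by omega
      rw [e2, map_add, map_smul, hD, hcEq, pow_succ]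
      module
  obtain ⟨c, hc, hcEq⟩ := claim (k - 1) (by omega)
  have e1 : d - 1 - (k - 1) = k := by omega
  have e2 : k - 1 + 1 = k := by omega
  rw [e1, e2] at hcEq
  have hz : θg k * θg k = 0 := ExteriorAlgebra.ι_sq_zero _
  rw [hz, smul_zero, add_zero] at hcEq
  exact ⟨c, hc, hcEq⟩

/-- for `d ≥ 1`, the quotient `Θ^2_d / ∂(Θ^2_{d-1})` is one-dimensional when `d`
is odd, spanned by the class of `θ^{(d+1)/2} θ^{(d-1)/2}` (which is a nontrivial class), and
it is zero when `d` is even. -/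
theorem stmt3 (D : Module.End ℝ (ExteriorAlgebra ℝ (ℕ →₀ ℝ)))
    (hder : ∀ a b, D (a * b) = D a * b + a * D b)
    (hθ : ∀ i, D (θg i) = θg (i + 1))
    (d : ℕ) (hd : 1 ≤ d) :
    (Odd d →
      (∀ a ∈ ThSpace 2 d, ∃ (r : ℝ) (b : ExteriorAlgebra ℝ (ℕ →₀ ℝ)),
        b ∈ ThSpace 2 (d - 1) ∧ a = r • (θg ((d + 1) / 2) * θg ((d - 1) / 2)) + D b) ∧
      ¬ ∃ b ∈ ThSpace 2 (d - 1), θg ((d + 1) / 2) * θg ((d - 1) / 2) = D b) ∧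
    (Even d → ∀ a ∈ ThSpace 2 d, ∃ b ∈ ThSpace 2 (d - 1), a = D b) := by
  constructor
  · intro hodd
    obtain ⟨k, hk⟩ := hodd
    have h1 : (d + 1) / 2 = k + 1 := by omega
    have h2 : (d - 1) / 2 = k := by omega
    rw [h1, h2]
    -- the key: θg d * θg 0 written in terms of the target class
    obtain ⟨c₂, hc₂, hc₂Eq⟩ := redA D hder hθ (d := d) k (k + 1) (by omega) (by omega)
    have hT : θg d * θg 0 =
        (-1 : ℝ) ^ k • (θg (k + 1) * θg k) + D ((-(-1 : ℝ) ^ k) • c₂) := by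
      have hsq : (-1 : ℝ) ^ k * (-1 : ℝ) ^ k = 1 := by
        rw [← pow_add]; exact Even.neg_one_pow ⟨k, rfl⟩
      rw [map_smul, hc₂Eq, smul_add, smul_smul, hsq, one_smul]
      module
    constructor
    · intro a ha
      induction ha using Submodule.span_induction with
      | mem x hx =>
        obtain ⟨l, hlen, hsort, hlsum, rfl⟩ := hx
        obtain ⟨u, v, rfl⟩ := list_len2 hlen
        have huv : v < u := by
          simp [List.pairwise_cons] at hsort; omega
        have hsum : u + v = d := by simpa using hlsum
        obtain ⟨c, hc, hcEq⟩ := redA D hder hθ (d := d) v u huv hsum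
        refine ⟨(-1 : ℝ) ^ v * (-1 : ℝ) ^ k,
          ((-1 : ℝ) ^ v • ((-(-1 : ℝ) ^ k) • c₂)) + c,
          add_mem (Submodule.smul_mem _ _ (Submodule.smul_mem _ _ hc₂)) hc, ?_⟩
        rw [mon2, hcEq, hT]
        simp only [map_add, map_smul, smul_add, smul_smul]
        module
      | zero => exact ⟨0, 0, zero_mem _, by simp⟩
      | add x y hx hy ihx ihy =>
        obtain ⟨r₁, b₁, hb₁, he₁⟩ := ihx
        obtain ⟨r₂, b₂, hb₂, he₂⟩ := ihy
        exact ⟨r₁ + r₂, b₁ + b₂, add_mem hb₁ hb₂, by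
          rw [he₁, he₂, map_add, add_smul]; module⟩
      | smul t x hx ihx =>
        obtain ⟨r, b, hb, he⟩ := ihx
        exact ⟨t * r, t • b, Submodule.smul_mem _ _ hb, by
          rw [he, map_smul, smul_add, smul_smul]⟩
    · rintro ⟨c, hc, hEqT⟩
      have hodd' : Odd d := ⟨k, hk⟩
      set φ := ExteriorAlgebra.liftAlternating (fam d hodd') with hφ
      have hφT : φ (θg (k + 1) * θg k) = (-1 : ℝ) ^ k := phi_mon d hodd' (by omega)
      have hφD : ∀ x ∈ ThSpace 2 (d - 1), φ (D x) = 0 := by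
        intro x hx
        induction hx using Submodule.span_induction with
        | mem x hx =>
          obtain ⟨l, hlen, hsort, hlsum, rfl⟩ := hx
          obtain ⟨u, v, rfl⟩ := list_len2 hlen
          have huv : v < u := by
            simp [List.pairwise_cons] at hsort; omega
          have hsum : u + v = d - 1 := by simpa using hlsum
          rw [mon2, Dmul D hder hθ, map_add,
            phi_mon d hodd' (by omega : u + 1 + v = d),
            phi_mon d hodd' (by omega : u + (v + 1) = d), pow_succ]
          ring
        | zero => simp
        | add x y hx hy ihx ihy => rw [map_add, map_add, ihx, ihy, add_zero]
        | smul t x hx ihx => rw [map_smul, map_smul, ihx, smul_zero]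
      have h0 := hφD c hc
      rw [← hEqT, hφT] at h0
      exact pow_ne_zero k (by norm_num : (-1 : ℝ) ≠ 0) h0
  · intro heven a ha
    have hd2 : 2 ≤ d := by
      rcases heven with ⟨k, hk⟩; omega
    obtain ⟨c', hc', hc'Eq⟩ := redB D hder hθ hd2 heven
    induction ha using Submodule.span_induction with
    | mem x hx =>
      obtain ⟨l, hlen, hsort, hlsum, rfl⟩ := hx
      obtain ⟨u, v, rfl⟩ := list_len2 hlen
      have huv : v < u := by
        simp [List.pairwise_cons] at hsort; omega
      have hsum : u + v = d := by simpa using hlsum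
      obtain ⟨c, hc, hcEq⟩ := redA D hder hθ (d := d) v u huv hsum
      refine ⟨(-1 : ℝ) ^ v • c' + c,
        add_mem (Submodule.smul_mem _ _ hc') hc, ?_⟩
      rw [mon2, hcEq, hc'Eq, map_add, map_smul]
    | zero => exact ⟨0, zero_mem _, by simp⟩
    | add x y hx hy ihx ihy =>
      obtain ⟨b₁, hb₁, he₁⟩ := ihx
      obtain ⟨b₂, hb₂, he₂⟩ := ihy
      exact ⟨b₁ + b₂, add_mem hb₁ hb₂, by rw [he₁, he₂, map_add]⟩
    | smul t x hx ihx =>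
      obtain ⟨b, hb, he⟩ := ihx
      exact ⟨t • b, Submodule.smul_mem _ _ hb, by rw [he, map_smul]⟩
end

section
/- Let k ≥ 1 and let α = Σ_i α_i θ^i θ^{k−i}, where the sum runs over integers i with k/2 < i ≤ k and α_i ∈ ℝ. Then α^2 = 0 in the exterior algebra if and only if at most one of the coefficients α_i is nonzero. -/
open ExteriorAlgebra

noncomputable def fA (c : Fin 4 → ℕ) : (ℕ →₀ ℝ) [⋀^Fin 4]→ₗ[ℝ] ℝ :=
  Matrix.detRowAlternating.compLinearMap (LinearMap.pi fun n => Finsupp.lapply (c n))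

noncomputable def φ4 (c : Fin 4 → ℕ) : ExteriorAlgebra ℝ (ℕ →₀ ℝ) →ₗ[ℝ] ℝ :=
  liftAlternating (Function.update (fun n => (0 : (ℕ →₀ ℝ) [⋀^Fin n]→ₗ[ℝ] ℝ)) 4 (fA c))

lemma φ4_mon (c v : Fin 4 → ℕ) :
    φ4 c (θg (v 0) * θg (v 1) * (θg (v 2) * θg (v 3))) =
      Matrix.det (Matrix.of fun m n => if v m = c n then (1:ℝ) else 0) := by
  have h1 : θg (v 0) * θg (v 1) * (θg (v 2) * θg (v 3)) =
      ιMulti ℝ 4 (fun m => Finsupp.single (v m) 1) := by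
    simp [ιMulti_apply, θg, List.ofFn_succ, mul_assoc, Matrix.vecTail, Function.comp]
  rw [h1, φ4, liftAlternating_apply_ιMulti, Function.update_self]
  simp only [fA, AlternatingMap.compLinearMap_apply]
  congr 1
  ext m n
  simp [Matrix.detRowAlternating, LinearMap.pi_apply, Finsupp.lapply_apply,
    Finsupp.single_apply]

lemma detz (v c : Fin 4 → ℕ) (m : Fin 4) (h : ∀ n, v m ≠ c n) :
    Matrix.det (Matrix.of fun m n => if v m = c n then (1:ℝ) else 0) = 0 :=
  Matrix.det_eq_zero_of_row_eq_zero m (fun n => by simp [h n])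

lemma detr (v c : Fin 4 → ℕ) (m m' : Fin 4) (hmm : m ≠ m') (h : v m = v m') :
    Matrix.det (Matrix.of fun m n => if v m = c n then (1:ℝ) else 0) = 0 :=
  Matrix.det_zero_of_row_eq hmm (funext fun n => by simp [h])

lemma detid {a b c d : ℕ} (hab : a≠b) (hac : a≠c) (had : a≠d) (hbc : b≠c) (hbd : b≠d)
    (hcd : c≠d) :
    Matrix.det (Matrix.of fun m n => if ![a,b,c,d] m = ![a,b,c,d] n then (1:ℝ) else 0) = 1 := by
  simp [Matrix.det_succ_row_zero, Fin.sum_univ_succ, Fin.succAbove, hab, hac, had, hbc, hbd, hcd,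
    hab.symm, hac.symm, had.symm, hbc.symm, hbd.symm, hcd.symm]

lemma detsw {a b c d : ℕ} (hab : a≠b) (hac : a≠c) (had : a≠d) (hbc : b≠c) (hbd : b≠d)
    (hcd : c≠d) :
    Matrix.det (Matrix.of fun m n => if ![c,d,a,b] m = ![a,b,c,d] n then (1:ℝ) else 0) = 1 := by
  simp [Matrix.det_succ_row_zero, Fin.sum_univ_succ, Fin.succAbove, hab, hac, had, hbc, hbd, hcd,
    hab.symm, hac.symm, had.symm, hbc.symm, hbd.symm, hcd.symm]

lemma sqz (a b : ℕ) : (θg a * θg b) * (θg a * θg b) = 0 := by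
  have hw : θg b * θg a = -(θg a * θg b) := by
    have h := ExteriorAlgebra.ι_add_mul_swap (R := ℝ)
      (Finsupp.single a 1) (Finsupp.single b (1:ℝ))
    rw [θg, θg]
    exact eq_neg_of_add_eq_zero_right h
  have h1 : θg a * θg b * (θg a * θg b) = θg a * (θg b * θg a) * θg b := by
    rw [mul_assoc, mul_assoc, mul_assoc]
  rw [h1, hw]
  have h2 : θg a * θg a = 0 := ExteriorAlgebra.ι_sq_zero _
  simp only [mul_neg, neg_mul, ← mul_assoc, h2, zero_mul, neg_zero]

/-- for `k ≥ 1` and `α = Σ_{k/2 < i ≤ k} α_i θ^i θ^{k-i}`, one has `α² = 0`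
if and only if at most one of the coefficients `α_i` is nonzero. -/
theorem stmt5 (k : ℕ) (hk : 1 ≤ k) (α : ℕ → ℝ) :
    (∑ i ∈ (Finset.range (k + 1)).filter (fun i => k < 2 * i),
        α i • (θg i * θg (k - i))) *
      (∑ i ∈ (Finset.range (k + 1)).filter (fun i => k < 2 * i),
        α i • (θg i * θg (k - i))) = 0 ↔
    ∀ i ∈ (Finset.range (k + 1)).filter (fun i => k < 2 * i),
      ∀ j ∈ (Finset.range (k + 1)).filter (fun i => k < 2 * i),
        α i ≠ 0 → α j ≠ 0 → i = j := by
  set s := (Finset.range (k + 1)).filter (fun i => k < 2 * i) with hs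
  have hmem : ∀ p ∈ s, p ≤ k ∧ k < 2 * p := by
    intro p hp
    simp only [hs, Finset.mem_filter, Finset.mem_range] at hp
    omega
  have expand : (∑ i ∈ s, α i • (θg i * θg (k-i))) * (∑ i ∈ s, α i • (θg i * θg (k-i)))
      = ∑ p ∈ s, ∑ q ∈ s, (α p * α q) • ((θg p * θg (k-p)) * (θg q * θg (k-q))) := by
    rw [Finset.sum_mul_sum]
    simp_rw [smul_mul_smul_comm]
  constructor
  · intro h0 i hi j hj hai haj
    by_contra hij
    obtain ⟨hik, hi2⟩ := hmem i hi
    obtain ⟨hjk, hj2⟩ := hmem j hj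
    set c : Fin 4 → ℕ := ![i, k-i, j, k-j] with hc
    rw [expand] at h0
    have hφ := congrArg (φ4 c) h0
    simp only [map_sum, map_smul, map_zero] at hφ
    have key : ∀ p ∈ s, ∀ q ∈ s,
        (α p * α q) • φ4 c ((θg p * θg (k-p)) * (θg q * θg (k-q)))
        = (if p = i ∧ q = j then α i * α j else 0)
          + (if p = j ∧ q = i then α j * α i else 0) := by
      intro p hp q hq
      obtain ⟨hpk, hp2⟩ := hmem p hp
      obtain ⟨hqk, hq2⟩ := hmem q hq
      have hφm := φ4_mon c ![p, k-p, q, k-q]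
      simp only [Matrix.cons_val_zero, Matrix.cons_val_one, Matrix.head_cons,
        Matrix.cons_val_two, Matrix.cons_val_three, Matrix.tail_cons] at hφm
      by_cases hpq : p = q
      · subst hpq
        rw [hφm, detr _ _ 0 2 (by decide) (by simp)]
        have h1 : ¬ (p = i ∧ p = j) := by omega
        have h2 : ¬ (p = j ∧ p = i) := by omega
        simp [smul_zero, h1, h2]
      · by_cases hpi : p = i
        · subst hpi
          by_cases hqj : q = j
          · subst hqj
            rw [hφm, hc, detid (by omega) hij (by omega) (by omega) (by omega) (by omega)]
            simp [hij, hpq]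
          · rw [hφm, detz _ _ 2 ?_]
            · simp [hqj, hij]
            · intro n
              fin_cases n <;> simp [hc] <;> omega
        · by_cases hpj : p = j
          · subst hpj
            by_cases hqi : q = i
            · subst hqi
              rw [hφm, hc, detsw (by omega) hij (by omega) (by omega) (by omega) (by omega)]
              simp [hpi, hij]
            · rw [hφm, detz _ _ 2 ?_]
              · simp [hpi, hqi]
              · intro n
                fin_cases n <;> simp [hc] <;> omega
          · rw [hφm, detz _ _ 0 ?_]
            · simp [hpi, hpj]
            · intro n
              fin_cases n <;> simp [hc] <;> omega
    rw [Finset.sum_congr rfl (fun p hp => Finset.sum_congr rfl (fun q hq => key p hp q hq))] at hφ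
    have hsingle : ∀ (X : ℝ) (a b : ℕ), a ∈ s → b ∈ s →
        (∑ p ∈ s, ∑ q ∈ s, (if p = a ∧ q = b then X else 0)) = X := by
      intro X a b ha hb
      rw [Finset.sum_eq_single_of_mem a ha]
      · rw [Finset.sum_eq_single_of_mem b hb] <;> simp +contextual
      · intro p hp hpa
        apply Finset.sum_eq_zero
        intro q hq
        simp [hpa]
    simp only [Finset.sum_add_distrib] at hφ
    rw [hsingle _ i j hi hj, hsingle _ j i hj hi] at hφ
    have hx : α i * α j = 0 := by
      rw [mul_comm (α j)] at hφ
      linarith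
    rcases mul_eq_zero.mp hx with h | h
    · exact hai h
    · exact haj h
  · intro h
    rw [expand]
    apply Finset.sum_eq_zero
    intro p hp
    apply Finset.sum_eq_zero
    intro q hq
    by_cases hpq : p = q
    · subst hpq
      rw [sqz, smul_zero]
    · by_cases hp0 : α p = 0
      · simp [hp0]
      · have hq0 : α q = 0 := by
          by_contra hq0
          exact hpq (h p hp q hq hp0 hq0)
        simp [hq0]
end

section
/- Let d ≥ 1 and χ ∈ Θ^3_d. If the variational derivative δχ/δθ equals c · θ^i θ^{d−i} for some real constant c and some integer 0 ≤ i ≤ ⌊(d−1)/2⌋ (with θ^i θ^{d−i} interpreted via the index pair (d−i, i)), then c = 0. -/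
set_option maxHeartbeats 1000000

/-- `IsVarDer D pd χ v` asserts that `v` is the variational derivative
`δχ/δθ = Σ_{s≥0} (−1)^s ∂^s (∂χ/∂θ^s)` (a finite sum on each element). -/
def IsVarDer (D : Module.End ℝ (ExteriorAlgebra ℝ (ℕ →₀ ℝ)))
    (pd : ℕ → Module.End ℝ (ExteriorAlgebra ℝ (ℕ →₀ ℝ)))
    (χ v : ExteriorAlgebra ℝ (ℕ →₀ ℝ)) : Prop :=
  ∃ N : ℕ, (∀ s, N ≤ s → pd s χ = 0) ∧
    v = ∑ s ∈ Finset.range N, ((-1 : ℝ) ^ s) • ((D ^ s) (pd s χ))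

/-! ### Auxiliary machinery

We build, for each point `(x, y) ∈ ℝ²`, a linear functional `Lf x y` on the exterior
algebra with `Lf x y (θg p * θg q) = x^q y^p - x^p y^q`, via two Clifford contractions
followed by the projection to scalars. -/

/-- The dual vector `j ↦ x^j`. -/
noncomputable def φf (x : ℝ) : Module.Dual ℝ (ℕ →₀ ℝ) :=
  Finsupp.linearCombination ℝ (fun j => x ^ j)

/-- The functional `L_{x,y}`. -/
noncomputable def Lf (x y : ℝ) : ExteriorAlgebra ℝ (ℕ →₀ ℝ) →ₗ[ℝ] ℝ :=
  (ExteriorAlgebra.algebraMapInv).toLinearMap ∘ₗ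
    (CliffordAlgebra.contractLeft (φf x)) ∘ₗ (CliffordAlgebra.contractLeft (φf y))

lemma φf_single (x : ℝ) (j : ℕ) : φf x (Finsupp.single j 1) = x ^ j := by
  simp [φf]

lemma Lf_pair (x y : ℝ) (p q : ℕ) : Lf x y (θg p * θg q) = x ^ q * y ^ p - x ^ p * y ^ q := by
  have h1 : CliffordAlgebra.contractLeft (φf y) (θg p * θg q)
      = y ^ p • θg q - θg p * (algebraMap ℝ _ (y ^ q)) := by
    rw [θg, θg, CliffordAlgebra.contractLeft_ι_mul, CliffordAlgebra.contractLeft_ι]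
    simp [φf_single]
  have h2 : CliffordAlgebra.contractLeft (φf x) (CliffordAlgebra.contractLeft (φf y) (θg p * θg q))
      = algebraMap ℝ _ (y ^ p * x ^ q - x ^ p * y ^ q) := by
    rw [h1, map_sub, map_smul, θg, CliffordAlgebra.contractLeft_ι,
      CliffordAlgebra.contractLeft_mul_algebraMap, θg, CliffordAlgebra.contractLeft_ι]
    simp only [φf_single]
    rw [Algebra.smul_def, map_sub, map_mul, map_mul]
  rw [Lf]
  simp only [LinearMap.coe_comp, Function.comp_apply, AlgHom.toLinearMap_apply, h2]
  rw [show ExteriorAlgebra.algebraMapInv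
      ((algebraMap ℝ (ExteriorAlgebra ℝ (ℕ →₀ ℝ))) (y ^ p * x ^ q - x ^ p * y ^ q))
      = y ^ p * x ^ q - x ^ p * y ^ q from ExteriorAlgebra.algebraMap_leftInverse _ _]
  ring

/-- The span of products of two generators. -/
noncomputable def P2 : Submodule ℝ (ExteriorAlgebra ℝ (ℕ →₀ ℝ)) :=
  Submodule.span ℝ {w | ∃ p q, w = θg p * θg q}

section DD
variable (D : Module.End ℝ (ExteriorAlgebra ℝ (ℕ →₀ ℝ)))
    (hder : ∀ a b, D (a * b) = D a * b + a * D b)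
    (hθ : ∀ i, D (θg i) = θg (i + 1))
    (pd : ℕ → Module.End ℝ (ExteriorAlgebra ℝ (ℕ →₀ ℝ)))
    (hpd1 : ∀ s, pd s 1 = 0)
    (hpdθ : ∀ s t x, pd s (θg t * x) = (if s = t then x else 0) - θg t * pd s x)

include hder hθ in
lemma D_pair (p q : ℕ) : D (θg p * θg q) = θg (p+1) * θg q + θg p * θg (q+1) := by
  rw [hder, hθ, hθ]

include hder hθ in
lemma D_memP2 : ∀ w ∈ P2, D w ∈ P2 := by
  intro w hw
  induction hw using Submodule.span_induction with
  | mem w hw =>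
    obtain ⟨p, q, rfl⟩ := hw
    rw [D_pair D hder hθ]
    exact Submodule.add_mem _ (Submodule.subset_span ⟨p+1, q, rfl⟩)
      (Submodule.subset_span ⟨p, q+1, rfl⟩)
  | zero => simp only [map_zero]; exact Submodule.zero_mem P2
  | add w₁ w₂ _ _ h1 h2 => rw [map_add]; exact Submodule.add_mem _ h1 h2
  | smul r w _ h => rw [map_smul]; exact Submodule.smul_mem _ _ h

include hder hθ in
lemma Lf_D (x y : ℝ) : ∀ w ∈ P2, Lf x y (D w) = (x + y) * Lf x y w := by
  intro w hw
  induction hw using Submodule.span_induction with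
  | mem w hw =>
    obtain ⟨p, q, rfl⟩ := hw
    rw [D_pair D hder hθ, map_add, Lf_pair, Lf_pair, Lf_pair]
    ring
  | zero => simp
  | add w₁ w₂ _ _ h1 h2 => rw [map_add, map_add, map_add, h1, h2]; ring
  | smul r w _ h => rw [map_smul, map_smul, map_smul, h, smul_eq_mul, smul_eq_mul]; ring

include hder hθ in
lemma Lf_Dpow (x y : ℝ) : ∀ s : ℕ, ∀ w ∈ P2, Lf x y ((D ^ s) w) = (x + y) ^ s * Lf x y w := by
  intro s
  induction s with
  | zero => intro w _; simp
  | succ n ih =>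
    intro w hw
    rw [pow_succ, Module.End.mul_apply, ih _ (D_memP2 D hder hθ w hw),
      Lf_D D hder hθ x y w hw, pow_succ]
    ring

include hpd1 hpdθ in
lemma pd_mon (s a b c : ℕ) :
    pd s (mon [a, b, c]) = (if s = a then θg b * θg c else 0)
      - (if s = b then θg a * θg c else 0) + (if s = c then θg a * θg b else 0) := by
  have hm : mon [a, b, c] = θg a * (θg b * (θg c * 1)) := by
    simp [mon, mul_assoc]
  rw [hm, hpdθ, hpdθ, hpdθ, hpd1]
  by_cases h1 : s = a <;> by_cases h2 : s = b <;> by_cases h3 : s = c <;>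
    simp [h1, h2, h3, mul_sub, mul_one, mul_zero, sub_zero] <;>
    first
    | rfl
    | (try simp_all) <;> abel

lemma ite_pair_memP2 (P : Prop) [Decidable P] (u v : ℕ) :
    (if P then θg u * θg v else 0) ∈ P2 := by
  split
  · exact Submodule.subset_span ⟨u, v, rfl⟩
  · exact Submodule.zero_mem _

include hpd1 hpdθ in
lemma pd_mon_memP2 (s a b c : ℕ) : pd s (mon [a, b, c]) ∈ P2 := by
  rw [pd_mon pd hpd1 hpdθ]
  exact Submodule.add_mem _
    (Submodule.sub_mem _ (ite_pair_memP2 _ _ _) (ite_pair_memP2 _ _ _))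
    (ite_pair_memP2 _ _ _)

end DD

/-- The key scalar non-vanishing fact. -/
lemma Kne (i m : ℕ) (him : i < m) :
    (2:ℝ)^i - 2^m + ((-3:ℝ)^i - (-3)^m) ≠ 0 := by
  by_cases hm : m = 1
  · subst hm
    have : i = 0 := by omega
    subst this; norm_num
  · obtain ⟨k, rfl⟩ : ∃ k, m = k + 1 := ⟨m - 1, by omega⟩
    have hk : 1 ≤ k := by omega
    intro h0
    have heq : (-3:ℝ)^i - (-3)^(k+1) = -((2:ℝ)^i - 2^(k+1)) := by linarith
    have h1 : |(-3:ℝ)^(k+1)| = 3^(k+1) := by rw [abs_pow]; norm_num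
    have h2 : |(-3:ℝ)^i| = 3^i := by rw [abs_pow]; norm_num
    have h3 : (3:ℝ)^(k+1) - 3^i ≤ |(-3:ℝ)^i - (-3)^(k+1)| := by
      rw [abs_sub_comm]
      calc (3:ℝ)^(k+1) - 3^i = |(-3:ℝ)^(k+1)| - |(-3:ℝ)^i| := by rw [h1, h2]
        _ ≤ |(-3:ℝ)^(k+1) - (-3)^i| := abs_sub_abs_le_abs_sub _ _
    have h2le : (2:ℝ)^i ≤ 2^(k+1) :=
      pow_le_pow_right₀ (by norm_num) (by omega)
    have h4 : |(-3:ℝ)^i - (-3)^(k+1)| = 2^(k+1) - 2^i := by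
      rw [heq, abs_neg, abs_of_nonpos (by linarith), neg_sub]
    rw [h4] at h3
    have h5 : (3:ℝ)^i ≤ 3^k := pow_le_pow_right₀ (by norm_num) (by omega)
    have h6 : (2:ℝ)^k < 3^k := by
      apply pow_lt_pow_left₀ (by norm_num) (by norm_num)
      omega
    have h7 : (1:ℝ) ≤ 2^i := one_le_pow₀ (by norm_num)
    rw [pow_succ, pow_succ] at h3
    nlinarith

/-- Value of `Lf x y` on a pair monomial, as a scalar abbreviation. -/
noncomputable def ℓv (x y : ℝ) (p q : ℕ) : ℝ := x ^ q * y ^ p - x ^ p * y ^ q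

/-- for `d ≥ 1` and `χ ∈ Θ^3_d`, if `δχ/δθ = c · θ^{d-i} θ^i` for some
`0 ≤ i ≤ ⌊(d−1)/2⌋`, then `c = 0`. -/
theorem stmt10 (D : Module.End ℝ (ExteriorAlgebra ℝ (ℕ →₀ ℝ)))
    (hder : ∀ a b, D (a * b) = D a * b + a * D b)
    (hθ : ∀ i, D (θg i) = θg (i + 1))
    (pd : ℕ → Module.End ℝ (ExteriorAlgebra ℝ (ℕ →₀ ℝ)))
    (hpd1 : ∀ s, pd s 1 = 0)
    (hpdθ : ∀ s t x, pd s (θg t * x) = (if s = t then x else 0) - θg t * pd s x)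
    (d : ℕ) (hd : 1 ≤ d) (χ : ExteriorAlgebra ℝ (ℕ →₀ ℝ)) (hχ : χ ∈ ThSpace 3 d)
    (c : ℝ) (i : ℕ) (hi : i ≤ (d - 1) / 2)
    (hv : IsVarDer D pd χ (c • (θg (d - i) * θg i))) :
    c = 0 := by
  classical
  obtain ⟨N, hN, hvv⟩ := hv
  rw [ThSpace] at hχ
  obtain ⟨n, t, g, hrep⟩ := Submodule.mem_span_set'.mp hχ
  choose l hlen hsort hsum hmon using fun j : Fin n => (g j).2
  have htrip : ∀ j, ∃ a b c, l j = [a, b, c] := by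
    intro j
    have h := hlen j
    rcases hlj : l j with _ | ⟨a, _ | ⟨b, _ | ⟨c, _ | rest⟩⟩⟩ <;>
      rw [hlj] at h <;> simp_all
  choose A B C hABC using htrip
  have hrep' : χ = ∑ j : Fin n, t j • mon [A j, B j, C j] := by
    rw [← hrep]
    refine Finset.sum_congr rfl fun j _ => ?_
    rw [hmon j, hABC j]
  -- bound on indices
  set N' : ℕ := max N (d + 1) with hN'
  have hAle : ∀ j, A j < N' ∧ B j < N' ∧ C j < N' := by
    intro j
    have h := hsum j
    rw [hABC j] at h
    simp [List.sum_cons] at h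
    have h1 : d + 1 ≤ N' := le_max_right _ _
    omega
  -- pd s χ
  have hpdχ : ∀ s, pd s χ = ∑ j : Fin n, t j • pd s (mon [A j, B j, C j]) := by
    intro s
    rw [hrep', map_sum]
    exact Finset.sum_congr rfl fun j _ => (map_smul _ _ _)
  have hpdmem : ∀ s, pd s χ ∈ P2 := by
    intro s
    rw [hpdχ s]
    exact Submodule.sum_mem _ fun j _ =>
      Submodule.smul_mem _ _ (pd_mon_memP2 pd hpd1 hpdθ s (A j) (B j) (C j))
  -- extend sum from N to N'
  have hvv' : c • (θg (d - i) * θg i)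
      = ∑ s ∈ Finset.range N', ((-1 : ℝ) ^ s) • ((D ^ s) (pd s χ)) := by
    rw [hvv]
    refine Finset.sum_subset (Finset.range_subset_range.2 (le_max_left _ _)) fun s _ hs => ?_
    rw [hN s (by simpa using hs), map_zero, smul_zero]
  -- the main evaluation at a point (x, y)
  have main : ∀ x y : ℝ,
      c * ℓv x y (d - i) i = ∑ j : Fin n, t j *
        ((-1:ℝ)^(A j) * (x+y)^(A j) * ℓv x y (B j) (C j)
          - (-1:ℝ)^(B j) * (x+y)^(B j) * ℓv x y (A j) (C j)
          + (-1:ℝ)^(C j) * (x+y)^(C j) * ℓv x y (A j) (B j)) := by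
    intro x y
    have lhs : Lf x y (c • (θg (d - i) * θg i)) = c * ℓv x y (d - i) i := by
      rw [map_smul, Lf_pair, smul_eq_mul, ℓv]
    rw [← lhs, hvv', map_sum]
    have step : ∀ s ∈ Finset.range N',
        Lf x y (((-1 : ℝ) ^ s) • (D ^ s) (pd s χ))
          = ∑ j : Fin n, t j * ((-1:ℝ)^s * (x+y)^s *
             ((if s = A j then ℓv x y (B j) (C j) else 0)
              - (if s = B j then ℓv x y (A j) (C j) else 0)
              + (if s = C j then ℓv x y (A j) (B j) else 0))) := by
      intro s _
      rw [map_smul, smul_eq_mul, Lf_Dpow D hder hθ x y s _ (hpdmem s), hpdχ s, map_sum]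
      rw [Finset.mul_sum, Finset.mul_sum]
      refine Finset.sum_congr rfl fun j _ => ?_
      rw [map_smul, smul_eq_mul, pd_mon pd hpd1 hpdθ]
      rw [map_add, map_sub]
      have e1 : Lf x y (if s = A j then θg (B j) * θg (C j) else 0)
          = (if s = A j then ℓv x y (B j) (C j) else 0) := by
        split <;> simp [Lf_pair, ℓv]
      have e2 : Lf x y (if s = B j then θg (A j) * θg (C j) else 0)
          = (if s = B j then ℓv x y (A j) (C j) else 0) := by
        split <;> simp [Lf_pair, ℓv]
      have e3 : Lf x y (if s = C j then θg (A j) * θg (B j) else 0)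
          = (if s = C j then ℓv x y (A j) (B j) else 0) := by
        split <;> simp [Lf_pair, ℓv]
      rw [e1, e2, e3]; ring
    rw [Finset.sum_congr rfl step, Finset.sum_comm]
    refine Finset.sum_congr rfl fun j _ => ?_
    obtain ⟨hA, hB, hC⟩ := hAle j
    have expand : ∀ s, t j * ((-1:ℝ)^s * (x+y)^s *
             ((if s = A j then ℓv x y (B j) (C j) else 0)
              - (if s = B j then ℓv x y (A j) (C j) else 0)
              + (if s = C j then ℓv x y (A j) (B j) else 0)))
        = (if s = A j then t j * ((-1:ℝ)^s * (x+y)^s * ℓv x y (B j) (C j)) else 0)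
          - (if s = B j then t j * ((-1:ℝ)^s * (x+y)^s * ℓv x y (A j) (C j)) else 0)
          + (if s = C j then t j * ((-1:ℝ)^s * (x+y)^s * ℓv x y (A j) (B j)) else 0) := by
      intro s
      simp only [mul_sub, mul_add, mul_ite, mul_zero]
    rw [Finset.sum_congr rfl fun s _ => expand s]
    rw [Finset.sum_add_distrib, Finset.sum_sub_distrib,
      Finset.sum_ite_eq' (Finset.range N') (A j),
      Finset.sum_ite_eq' (Finset.range N') (B j),
      Finset.sum_ite_eq' (Finset.range N') (C j),
      if_pos (Finset.mem_range.2 hA), if_pos (Finset.mem_range.2 hB),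
      if_pos (Finset.mem_range.2 hC)]
    ring
  -- combine the two points
  have h21 := main 2 1
  have h31 := main (-3) 1
  have hsum0 : c * ℓv 2 1 (d - i) i + c * ℓv (-3) 1 (d - i) i = 0 := by
    rw [h21, h31, ← Finset.sum_add_distrib]
    refine Finset.sum_eq_zero fun j _ => ?_
    have e1 : ∀ m : ℕ, (-1:ℝ)^m * (2+1)^m = (-3)^m := by
      intro m; rw [← mul_pow]; norm_num
    have e2 : ∀ m : ℕ, (-1:ℝ)^m * (-3+1)^m = 2^m := by
      intro m; rw [← mul_pow]; norm_num
    simp only [ℓv, e1, e2, one_pow, mul_one]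
    ring
  have hK : c * ((2:ℝ)^i - 2^(d-i) + ((-3:ℝ)^i - (-3)^(d-i))) = 0 := by
    simp only [ℓv, one_pow, mul_one] at hsum0
    linarith
  have him : i < d - i := by omega
  exact (mul_eq_zero.1 hK).resolve_right (Kne i (d - i) him)
end
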